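/- Levin's duality: min over h ∈ Γ^{h̄}(f,g) of ∬ c(x,y) h(x,y) dx dy equals the supremum over triples (u,v,w) with u ∈ L¹(f dx), v ∈ L¹(g dy), w ∈ L¹(h̄ dx dy), u(x) + v(y) − w(x,y) + c(x,y) ≥ 0 and w ≤ 0, of −∫ u f dx − ∫ v g dy + ∬ w h̄ dx dy. -/

import Mathlib

/-!
Weak duality is Fubini: integrating `u(x) + v(y) - w + c ≥ 0` against a plan `h` and using
`w ≤ 0`, `h ≤ h̄` bounds every dual value by `∬ c h`.

For the converse, truncate `c` to a bounded `c'` with `∬ |c - c'| h̄` small. For a bounded cost,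
regard plans as functionals on `L²(h̄ dx dy)`: the functionals with `0 ≤ ℓ ≤ ∫` form a weak-*
compact convex set, and they are exactly the densities `θ h̄` with `0 ≤ θ ≤ 1`. The Lagrangian
`∬ (c' + u + v) h - ∫ u f - ∫ v g` is affine in `h` and in the bounded potentials `(u, v)`, and for
every `h` some `(u, v)` pushes it above any `γ` below the primal value (for a plan take `(0, 0)`,
otherwise a large multiple of an indicator testing a violated marginal). A minimax argument (finite subcover, then
Hahn–Banach in `ℝⁿ`) produces one `(u, v)` that works for all `h`; minimizing over `h` picks
`h = h̄ 1_{c' + u + v < 0}`, whose Lagrangian is the dual value of `(u, v, min (c' + u + v) 0)`.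
-/

open MeasureTheory

namespace Levin

section Integrability

variable {α : Type*} [MeasurableSpace α] {μ : Measure α}

theorem integrable_mul_of_ae_bounds {c w h : α → ℝ} (hc : AEStronglyMeasurable c μ)
    (hcw : Integrable (fun p => c p * w p) μ) (hh : AEStronglyMeasurable h μ)
    (hhw : ∀ᵐ p ∂μ, 0 ≤ h p ∧ h p ≤ w p) :
    Integrable (fun p => c p * h p) μ :=
  hcw.norm.mono' (hc.mul hh) <| hhw.mono fun p hp => by
    rw [norm_mul, norm_mul, Real.norm_of_nonneg hp.1, Real.norm_of_nonneg (hp.1.trans hp.2)]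
    exact mul_le_mul_of_nonneg_left hp.2 (norm_nonneg _)

theorem integrable_of_ae_bounds {w h : α → ℝ}
    (hw : Integrable w μ) (hh : AEStronglyMeasurable h μ) (hhw : ∀ᵐ p ∂μ, 0 ≤ h p ∧ h p ≤ w p) :
    Integrable h μ :=
  hw.mono' hh <| hhw.mono fun _ hp => by rw [Real.norm_of_nonneg hp.1]; exact hp.2

theorem integrable_mul_of_hasCompactSupport {Z : Type*} [TopologicalSpace Z] [MeasurableSpace Z]
    {μ : Measure Z} {c w : Z → ℝ} (hc : LocallyIntegrable c μ) (hw : AEStronglyMeasurable w μ)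
    {C : ℝ} (hwC : ∀ z, ‖w z‖ ≤ C) (hws : HasCompactSupport w) :
    Integrable (fun z => c z * w z) μ := by
  have hcw : IntegrableOn (fun z => c z * w z) (tsupport w) μ :=
    (hc.integrableOn_isCompact hws).mul_bdd hw.restrict (ae_of_all _ hwC)
  exact hcw.integrable_of_forall_notMem_eq_zero fun _ hz => by
    rw [image_eq_zero_of_notMem_tsupport hz, mul_zero]

theorem integral_mul_sub_integral_mul_le {c c' w h : α → ℝ}
    (hch : Integrable (fun x => c x * h x) μ) (hc'h : Integrable (fun x => c' x * h x) μ)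
    (hE : Integrable (fun x => |c x - c' x| * w x) μ) (hhw : ∀ᵐ x ∂μ, 0 ≤ h x ∧ h x ≤ w x) :
    ∫ x, c x * h x ∂μ - ∫ x, c' x * h x ∂μ ≤ ∫ x, |c x - c' x| * w x ∂μ := by
  rw [← integral_sub hch hc'h]
  refine integral_mono_ae (hch.sub hc'h) hE (hhw.mono fun x hx => ?_)
  calc c x * h x - c' x * h x = (c x - c' x) * h x := by ring
    _ ≤ |c x - c' x| * h x := mul_le_mul_of_nonneg_right (le_abs_self _) hx.1
    _ ≤ |c x - c' x| * w x := mul_le_mul_of_nonneg_left hx.2 (abs_nonneg _)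

end Integrability

section BoundedMeasurable

open Filter Topology

variable {α : Type*} [MeasurableSpace α] {μ : Measure α}

variable (α) in
def boundedMeasurable : Set (α → ℝ) :=
  {u | Measurable u ∧ ∃ C, ∀ x, ‖u x‖ ≤ C}

theorem convex_boundedMeasurable : Convex ℝ (boundedMeasurable α) := by
  rintro u₁ ⟨hu₁, C₁, hC₁⟩ u₂ ⟨hu₂, C₂, hC₂⟩ a b ha hb -
  refine ⟨(hu₁.const_smul a).add (hu₂.const_smul b), a * C₁ + b * C₂, fun x => ?_⟩
  refine (norm_add_le _ _).trans ?_
  simp only [Pi.smul_apply, norm_smul, Real.norm_of_nonneg ha, Real.norm_of_nonneg hb]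
  gcongr
  exacts [hC₁ x, hC₂ x]

theorem zero_mem_boundedMeasurable : (0 : α → ℝ) ∈ boundedMeasurable α :=
  ⟨measurable_const, 0, fun _ => by simp⟩

theorem integrable_mul_of_mem_boundedMeasurable {u f : α → ℝ}
    (hu : u ∈ boundedMeasurable α) (hf : Integrable f μ) :
    Integrable (fun x => u x * f x) μ :=
  hf.bdd_mul hu.1.aestronglyMeasurable (ae_of_all _ hu.2.choose_spec)

theorem integral_smul_add_smul_mul {u₁ u₂ d : α → ℝ}
    (h₁ : Integrable (fun x => u₁ x * d x) μ) (h₂ : Integrable (fun x => u₂ x * d x) μ)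
    (a b : ℝ) :
    ∫ x, (a • u₁ + b • u₂) x * d x ∂μ = a * ∫ x, u₁ x * d x ∂μ + b * ∫ x, u₂ x * d x ∂μ := by
  simp only [Pi.add_apply, Pi.smul_apply, smul_eq_mul, add_mul, mul_assoc]
  rw [integral_add (h₁.const_mul a) (h₂.const_mul b), integral_const_mul, integral_const_mul]

theorem exists_mem_boundedMeasurable_lt_integral_mul {d : α → ℝ}
    (hd : Integrable d μ) (hd0 : ¬ d =ᵐ[μ] 0) (M : ℝ) :
    ∃ u ∈ boundedMeasurable α, M < ∫ x, u x * d x ∂μ := by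
  obtain ⟨A, hA, -, hAd⟩ : ∃ A, MeasurableSet A ∧ μ A < ⊤ ∧ ∫ x in A, d x ∂μ ≠ 0 := by
    by_contra! h
    exact hd0 (hd.ae_eq_zero_of_forall_setIntegral_eq_zero h)
  set T := (M + 1) / ∫ x in A, d x ∂μ
  refine ⟨A.indicator fun _ => T, ⟨measurable_const.indicator hA, |T|, fun x => ?_⟩, ?_⟩
  · by_cases hx : x ∈ A <;> simp [hx]
  · have hT : ∫ x, A.indicator (fun _ => T) x * d x ∂μ = T * ∫ x in A, d x ∂μ := by
      rw [← integral_const_mul, ← integral_indicator hA]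
      congr 1 with x
      by_cases hx : x ∈ A <;> simp [hx]
    rw [hT, div_mul_cancel₀ _ hAd]
    linarith

theorem exists_mem_boundedMeasurable_integral_abs_sub_mul_le {c w : α → ℝ}
    (hc : AEStronglyMeasurable c μ) (hw : AEStronglyMeasurable w μ) (hw0 : ∀ x, 0 ≤ w x)
    (hcw : Integrable (fun x => c x * w x) μ) {δ : ℝ} (hδ : 0 < δ) :
    ∃ c' ∈ boundedMeasurable α, Integrable (fun x => |c x - c' x| * w x) μ ∧
      ∫ x, |c x - c' x| * w x ∂μ ≤ δ := by
  set trunc : ℕ → α → ℝ := fun N x => max (-N) (min N (hc.mk c x))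
  have htrunc (N : ℕ) : trunc N ∈ boundedMeasurable α :=
    ⟨measurable_const.max (measurable_const.min hc.stronglyMeasurable_mk.measurable), N,
      fun x => by simp only [trunc, Real.norm_eq_abs, abs_le]; grind⟩
  have hmeas (N : ℕ) : AEStronglyMeasurable (fun x => |c x - trunc N x| * w x) μ :=
    (hc.sub (htrunc N).1.aestronglyMeasurable).norm.mul hw
  have hbound (N : ℕ) : ∀ᵐ x ∂μ, ‖|c x - trunc N x| * w x‖ ≤ ‖c x * w x‖ := by
    filter_upwards [hc.ae_eq_mk] with x hx
    rw [norm_mul, norm_mul, Real.norm_of_nonneg (hw0 x), norm_abs_eq_norm, hx]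
    refine mul_le_mul_of_nonneg_right ?_ (hw0 x)
    simp only [trunc, Real.norm_eq_abs]
    grind
  have hlim : Tendsto (fun N : ℕ => ∫ x, |c x - trunc N x| * w x ∂μ) atTop (𝓝 0) := by
    rw [← integral_zero α ℝ]
    refine tendsto_integral_of_dominated_convergence _ hmeas hcw.norm hbound ?_
    filter_upwards [hc.ae_eq_mk] with x hx
    refine tendsto_const_nhds.congr' ((eventually_ge_atTop ⌈|c x|⌉₊).mono fun N hN => ?_)
    have hN' : |hc.mk c x| ≤ N := hx ▸ Nat.ceil_le.1 hN
    simp only [trunc, hx]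
    rw [abs_le] at hN'
    rw [min_eq_right hN'.2, max_eq_right hN'.1, sub_self, abs_zero, zero_mul]
  obtain ⟨N, hN⟩ := (hlim.eventually (Iic_mem_nhds hδ)).exists
  exact ⟨trunc N, htrunc N, hcw.norm.mono' (hmeas N) (hbound N), hN⟩

end BoundedMeasurable

section Fubini

variable {α β : Type*} [MeasurableSpace α] [MeasurableSpace β] {μ : Measure α} {ν : Measure β}
  [SFinite μ] [SFinite ν]

theorem integrable_fst_mul_of_integral_eq {u f : α → ℝ} {h : α × β → ℝ}
    (hu : AEStronglyMeasurable u μ) (hh : Integrable h (μ.prod ν)) (hh0 : 0 ≤ᵐ[μ.prod ν] h)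
    (hhf : ∀ᵐ x ∂μ, ∫ y, h (x, y) ∂ν = f x) (huf : Integrable (fun x => u x * f x) μ) :
    Integrable (fun p => u p.1 * h p) (μ.prod ν) := by
  refine (integrable_prod_iff (hu.comp_fst.mul hh.1)).2 ⟨?_, huf.norm.congr ?_⟩
  · filter_upwards [hh.prod_right_ae] with x hx using hx.const_mul (u x)
  · filter_upwards [Measure.ae_ae_of_ae_prod hh0, hhf] with x hx0 hx
    have hf0 : 0 ≤ f x := hx ▸ integral_nonneg_of_ae hx0
    calc ‖u x * f x‖ = ‖u x‖ * ∫ y, h (x, y) ∂ν := by rw [norm_mul, hx, Real.norm_of_nonneg hf0]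
      _ = ∫ y, ‖u x * h (x, y)‖ ∂ν := by
        rw [← integral_const_mul]
        refine integral_congr_ae ?_
        filter_upwards [hx0] with y hy
        rw [norm_mul, Real.norm_of_nonneg hy]

theorem integrable_snd_mul_of_integral_eq {v g : β → ℝ} {h : α × β → ℝ}
    (hv : AEStronglyMeasurable v ν) (hh : Integrable h (μ.prod ν)) (hh0 : 0 ≤ᵐ[μ.prod ν] h)
    (hhg : ∀ᵐ y ∂ν, ∫ x, h (x, y) ∂μ = g y) (hvg : Integrable (fun y => v y * g y) ν) :
    Integrable (fun p => v p.2 * h p) (μ.prod ν) :=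
  (integrable_fst_mul_of_integral_eq hv hh.swap
    (Measure.measurePreserving_swap.quasiMeasurePreserving.ae hh0) hhg hvg).swap

theorem integral_fst_mul_eq {u : α → ℝ} {h : α × β → ℝ}
    (huh : Integrable (fun p => u p.1 * h p) (μ.prod ν)) :
    ∫ p, u p.1 * h p ∂μ.prod ν = ∫ x, u x * ∫ y, h (x, y) ∂ν ∂μ := by
  simp_rw [integral_prod _ huh, integral_const_mul]

theorem integral_snd_mul_eq {v : β → ℝ} {h : α × β → ℝ}
    (hvh : Integrable (fun p => v p.2 * h p) (μ.prod ν)) :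
    ∫ p, v p.2 * h p ∂μ.prod ν = ∫ y, v y * ∫ x, h (x, y) ∂μ ∂ν := by
  simp_rw [integral_prod_symm _ hvh, integral_const_mul]

end Fubini

section Minimax

theorem exists_mem_stdSimplex_forall_lt_sum_mul {ι : Type*} [Fintype ι] {C : Set (ι → ℝ)}
    (hC : IsCompact C) (hCc : Convex ℝ C) (hCne : C.Nonempty) {γ : ℝ}
    (hCγ : ∀ z ∈ C, ∃ i, γ < z i) :
    ∃ p ∈ stdSimplex ℝ ι, ∀ z ∈ C, γ < ∑ i, p i * z i := by
  classical
  set D : Set (ι → ℝ) := {z | ∀ i, z i ≤ γ}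
  have hD : IsClosed D := by
    simp only [D, Set.ofPred_forall]
    exact isClosed_iInter fun i => isClosed_le (continuous_apply i) continuous_const
  have hDc : Convex ℝ D := fun z₁ h₁ z₂ h₂ a b ha hb hab i =>
    calc a * z₁ i + b * z₂ i ≤ a * γ + b * γ := by gcongr; exacts [h₁ i, h₂ i]
      _ = γ := by rw [← add_mul, hab, one_mul]
  have hdisj : Disjoint C D := Set.disjoint_left.2 fun z hz hzD => by
    obtain ⟨i, hi⟩ := hCγ z hz
    exact (hzD i).not_gt hi
  obtain ⟨φ, a, b, hφC, hab, hφD⟩ := geometric_hahn_banach_compact_closed hCc hC hDc hD hdisj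
  set e : ι → ι → ℝ := fun i j => if i = j then 1 else 0
  have hφ (z : ι → ℝ) : φ z = ∑ i, z i * φ (e i) :=
    (φ : (ι → ℝ) →ₗ[ℝ] ℝ).pi_apply_eq_sum_univ z
  have hγD : (fun _ => γ) ∈ D := fun _ => le_rfl
  -- `D` is unbounded below in every coordinate, so `φ` is nonpositive on the unit vectors.
  have hφe (i : ι) : φ (e i) ≤ 0 := by
    by_contra! hpos
    set r := (φ (fun _ => γ) - b) / φ (e i)
    have hr : 0 ≤ r := div_nonneg (by linarith [hφD _ hγD]) hpos.le
    have hmem : (fun _ => γ) - r • e i ∈ D := fun j => by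
      by_cases hj : i = j <;> simp [e, hj, hr]
    have := hφD _ hmem
    rw [map_sub, map_smul, smul_eq_mul, div_mul_cancel₀ _ hpos.ne'] at this
    linarith
  have hsep (z : ι → ℝ) (hz : z ∈ C) : ∑ i, z i * φ (e i) < ∑ i, γ * φ (e i) := by
    rw [← hφ, ← hφ]
    exact (hφC z hz).trans (hab.trans (hφD _ hγD))
  set s := ∑ i, -φ (e i)
  have hs : 0 < s := by
    refine (Finset.sum_nonneg fun i _ => neg_nonneg.2 (hφe i)).lt_of_ne fun h0 => ?_
    have hφe0 (i : ι) : φ (e i) = 0 := neg_eq_zero.1 <|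
      (Finset.sum_eq_zero_iff_of_nonneg fun j _ => neg_nonneg.2 (hφe j)).1 h0.symm i
        (Finset.mem_univ i)
    obtain ⟨z, hz⟩ := hCne
    simpa [hφe0] using hsep z hz
  refine ⟨fun i => -φ (e i) / s, ⟨fun i => div_nonneg (neg_nonneg.2 (hφe i)) hs.le, ?_⟩,
    fun z hz => ?_⟩
  · rw [← Finset.sum_div, div_self hs.ne']
  · have hsum : ∑ i, -φ (e i) / s * z i = -(∑ i, z i * φ (e i)) / s := by
      rw [← Finset.sum_neg_distrib, Finset.sum_div]
      exact Finset.sum_congr rfl fun i _ => by ring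
    have hγs : γ * s = -∑ i, γ * φ (e i) := by
      simp only [s, Finset.mul_sum, mul_neg, Finset.sum_neg_distrib]
    rw [hsum, lt_div_iff₀ hs, hγs]
    linarith [hsep z hz]

/-- A minimax lemma: compactness leaves finitely many `y`, Hahn–Banach in `ℝⁿ` (using that `F` is
affine in `x`) turns them into a convex combination, and concavity in `y` merges it into one `y`. -/
theorem exists_mem_forall_lt_of_forall_exists_lt {E V : Type*} [TopologicalSpace E]
    [AddCommGroup E] [Module ℝ E] [AddCommGroup V] [Module ℝ V] {S : Set E} {T : Set V}
    {F : E → V → ℝ} {γ : ℝ} (hS : IsCompact S) (hSc : Convex ℝ S) (hSne : S.Nonempty)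
    (hcont : ∀ y ∈ T, Continuous fun x => F x y)
    (haff : ∀ y ∈ T, ∀ x₁ ∈ S, ∀ x₂ ∈ S, ∀ a b : ℝ, 0 ≤ a → 0 ≤ b → a + b = 1 →
      F (a • x₁ + b • x₂) y = a * F x₁ y + b * F x₂ y)
    (hconc : ∀ x ∈ S, ConcaveOn ℝ T (F x)) (hγ : ∀ x ∈ S, ∃ y ∈ T, γ < F x y) :
    ∃ y ∈ T, ∀ x ∈ S, γ < F x y := by
  obtain ⟨t, ht⟩ := hS.elim_finite_subcover (fun y : T => {x | γ < F x y})
    (fun y => isOpen_lt continuous_const (hcont y y.2)) fun x hx => by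
      obtain ⟨y, hyT, hy⟩ := hγ x hx
      exact Set.mem_iUnion.2 ⟨⟨y, hyT⟩, hy⟩
  set Φ : E → t → ℝ := fun x i => F x i.1
  have hΦS : Convex ℝ (Φ '' S) := by
    rintro _ ⟨x₁, hx₁, rfl⟩ _ ⟨x₂, hx₂, rfl⟩ a b ha hb hab
    exact ⟨a • x₁ + b • x₂, hSc hx₁ hx₂ ha hb hab,
      funext fun i => haff _ i.1.2 x₁ hx₁ x₂ hx₂ a b ha hb hab⟩
  obtain ⟨p, hp, hpΦ⟩ := exists_mem_stdSimplex_forall_lt_sum_mul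
    (hS.image (continuous_pi fun i => hcont _ i.1.2)) hΦS (hSne.image Φ) (by
      rintro _ ⟨x, hx, rfl⟩
      obtain ⟨i, hit, hi⟩ := Set.mem_iUnion₂.1 (ht hx)
      exact ⟨⟨i, hit⟩, hi⟩)
  have hpT : ∑ i, p i • (i.1 : V) ∈ T :=
    (hconc _ hSne.some_mem).1.sum_mem (fun i _ => hp.1 i) hp.2 fun i _ => i.1.2
  refine ⟨_, hpT, fun x hx => (hpΦ _ ⟨x, hx, rfl⟩).trans_le ?_⟩
  exact (hconc x hx).le_map_sum (fun i _ => hp.1 i) hp.2 fun i _ => i.1.2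

end Minimax

section SubDensities

variable {Z : Type*} [MeasurableSpace Z] (ν : Measure Z)

open scoped Classical in
/-- `ℓ` evaluated at the class of `φ` in `L²(ν)`; junk value `0` when `φ ∉ L²(ν)`. -/
noncomputable def pairing (ℓ : WeakDual ℝ (Lp ℝ 2 ν)) (φ : Z → ℝ) : ℝ :=
  if hφ : MemLp φ 2 ν then ℓ (hφ.toLp φ) else 0

theorem continuous_pairing (φ : Z → ℝ) : Continuous fun ℓ => pairing ν ℓ φ := by
  unfold pairing
  split_ifs
  exacts [WeakDual.eval_continuous _, continuous_const]

theorem pairing_smul_add_smul (ℓ₁ ℓ₂ : WeakDual ℝ (Lp ℝ 2 ν)) (a b : ℝ) (φ : Z → ℝ) :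
    pairing ν (a • ℓ₁ + b • ℓ₂) φ = a * pairing ν ℓ₁ φ + b * pairing ν ℓ₂ φ := by
  unfold pairing
  split_ifs
  exacts [rfl, by ring]

variable [IsFiniteMeasure ν]

/-- The functionals `0 ≤ ℓ ≤ ∫` on `L²(ν)`. The norm bound follows from the order bounds, but
stating it puts the set inside a closed ball, where Banach–Alaoglu applies. -/
def subDensities : Set (WeakDual ℝ (Lp ℝ 2 ν)) :=
  {ℓ | ‖WeakDual.toStrongDual ℓ‖ ≤ ‖Lp.const 2 ν (1 : ℝ)‖ ∧
    ∀ G : Lp ℝ 2 ν, 0 ≤ᵐ[ν] G → 0 ≤ ℓ G ∧ ℓ G ≤ ∫ z, G z ∂ν}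

theorem isCompact_subDensities : IsCompact (subDensities ν) := by
  have hball := WeakDual.isCompact_closedBall (0 : StrongDual ℝ (Lp ℝ 2 ν))
    ‖Lp.const 2 ν (1 : ℝ)‖
  have hclosed : IsClosed {ℓ : WeakDual ℝ (Lp ℝ 2 ν) |
      ∀ G : Lp ℝ 2 ν, 0 ≤ᵐ[ν] G → 0 ≤ ℓ G ∧ ℓ G ≤ ∫ z, G z ∂ν} := by
    simp only [Set.ofPred_forall]
    refine isClosed_iInter fun G => isClosed_iInter fun _ => ?_
    exact (isClosed_le continuous_const (WeakDual.eval_continuous G)).inter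
      (isClosed_le (WeakDual.eval_continuous G) continuous_const)
  refine hball.of_isClosed_subset ?_ fun ℓ hℓ => by simpa using hℓ.1
  convert hball.isClosed.inter hclosed using 1
  ext ℓ
  simp [subDensities]

theorem convex_subDensities : Convex ℝ (subDensities ν) := by
  rintro ℓ₁ ⟨hn₁, h₁⟩ ℓ₂ ⟨hn₂, h₂⟩ a b ha hb hab
  refine ⟨?_, fun G hG => ?_⟩
  · change ‖a • WeakDual.toStrongDual ℓ₁ + b • WeakDual.toStrongDual ℓ₂‖ ≤ _
    refine (norm_add_le _ _).trans ?_
    rw [norm_smul, norm_smul, Real.norm_of_nonneg ha, Real.norm_of_nonneg hb]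
    calc _ ≤ a * ‖Lp.const 2 ν (1 : ℝ)‖ + b * ‖Lp.const 2 ν (1 : ℝ)‖ := by gcongr
      _ = _ := by rw [← add_mul, hab, one_mul]
  · obtain ⟨h₁l, h₁u⟩ := h₁ G hG
    obtain ⟨h₂l, h₂u⟩ := h₂ G hG
    change 0 ≤ a * ℓ₁ G + b * ℓ₂ G ∧ a * ℓ₁ G + b * ℓ₂ G ≤ _
    constructor <;> nlinarith

theorem exists_density_of_mem_subDensities {ℓ : WeakDual ℝ (Lp ℝ 2 ν)}
    (hℓ : ℓ ∈ subDensities ν) :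
    ∃ θ : Z → ℝ, Measurable θ ∧ (∀ z, θ z ∈ Set.Icc 0 1) ∧
      ∀ φ, MemLp φ 2 ν → pairing ν ℓ φ = ∫ z, θ z * φ z ∂ν := by
  set ρ : Lp ℝ 2 ν := (InnerProductSpace.toDual ℝ _).symm (WeakDual.toStrongDual ℓ)
  have hρ (G : Lp ℝ 2 ν) : ℓ G = ∫ z, ρ z * G z ∂ν := by
    change WeakDual.toStrongDual ℓ G = _
    rw [← InnerProductSpace.toDual_symm_apply, L2.inner_def]
    simp [mul_comm, ρ]
  have hρ_int : Integrable ρ ν := (Lp.memLp ρ).integrable one_le_two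
  have hρA {A : Set Z} (hA : MeasurableSet A) :
      0 ≤ ∫ z in A, ρ z ∂ν ∧ ∫ z in A, ρ z ∂ν ≤ ν.real A := by
    have hI : 0 ≤ᵐ[ν] indicatorConstLp 2 hA (measure_ne_top ν A) (1 : ℝ) := by
      filter_upwards [indicatorConstLp_coeFn (p := 2) (hs := hA) (hμs := measure_ne_top ν A)
        (c := (1 : ℝ))] with z hz
      rw [hz]
      exact Set.indicator_nonneg (fun _ _ => zero_le_one) z
    have hℓA : ℓ (indicatorConstLp 2 hA (measure_ne_top ν A) (1 : ℝ)) = ∫ z in A, ρ z ∂ν := by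
      change WeakDual.toStrongDual ℓ _ = _
      rw [← InnerProductSpace.toDual_symm_apply, real_inner_comm, L2.inner_indicatorConstLp_one]
    have := hℓ.2 _ hI
    rwa [hℓA, integral_indicatorConstLp, smul_eq_mul, mul_one] at this
  have hρ0 : 0 ≤ᵐ[ν] ρ :=
    ae_nonneg_of_forall_setIntegral_nonneg hρ_int fun A hA _ => (hρA hA).1
  have hρ1 : 0 ≤ᵐ[ν] fun z => 1 - ρ z :=
    ae_nonneg_of_forall_setIntegral_nonneg ((integrable_const 1).sub hρ_int) fun A hA _ => by
      rw [integral_sub (integrable_const 1).integrableOn hρ_int.integrableOn, setIntegral_const,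
        smul_eq_mul, mul_one]
      linarith [(hρA hA).2]
  refine ⟨fun z => max 0 (min (ρ z) 1), measurable_const.max
    ((Lp.stronglyMeasurable ρ).measurable.min measurable_const),
    fun z => ⟨le_max_left _ _, max_le zero_le_one (min_le_right _ _)⟩, fun φ hφ => ?_⟩
  rw [pairing, dif_pos hφ, hρ]
  refine integral_congr_ae ?_
  filter_upwards [hρ0, hρ1, hφ.coeFn_toLp] with z h0 h1 hz
  simp only [Pi.zero_apply, sub_nonneg] at h0 h1
  rw [hz, min_eq_left h1, max_eq_right h0]

theorem exists_mem_subDensities_pairing_eq {θ : Z → ℝ} (hθ : Measurable θ)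
    (hθ01 : ∀ z, θ z ∈ Set.Icc 0 1) :
    ∃ ℓ ∈ subDensities ν, ∀ φ, MemLp φ 2 ν → pairing ν ℓ φ = ∫ z, θ z * φ z ∂ν := by
  have hθ_bdd : ∀ᵐ z ∂ν, ‖θ z‖ ≤ 1 := ae_of_all _ fun z => by
    rw [Real.norm_of_nonneg (hθ01 z).1]; exact (hθ01 z).2
  have hθL : MemLp θ 2 ν := MemLp.of_bound hθ.aestronglyMeasurable 1 hθ_bdd
  set ℓ := StrongDual.toWeakDual (InnerProductSpace.toDual ℝ _ (hθL.toLp θ))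
  have hℓ (G : Lp ℝ 2 ν) : ℓ G = ∫ z, θ z * G z ∂ν := by
    change inner ℝ (hθL.toLp θ) G = _
    rw [L2.inner_def]
    refine integral_congr_ae ?_
    filter_upwards [hθL.coeFn_toLp] with z hz
    simp [hz, mul_comm]
  refine ⟨ℓ, ⟨?_, fun G hG => ?_⟩, fun φ hφ => ?_⟩
  · change ‖InnerProductSpace.toDual ℝ _ (hθL.toLp θ)‖ ≤ _
    rw [LinearIsometryEquiv.norm_map]
    refine Lp.norm_le_norm_of_ae_le ?_
    filter_upwards [hθL.coeFn_toLp, Lp.coeFn_const (p := 2) (μ := ν) (1 : ℝ), hθ_bdd]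
      with z hz h1 hθz
    rw [hz, h1]
    simpa using hθz
  · have hGi : Integrable G ν := (Lp.memLp G).integrable one_le_two
    rw [hℓ]
    refine ⟨integral_nonneg_of_ae ?_, integral_mono_ae (hGi.bdd_mul hθ.aestronglyMeasurable hθ_bdd)
      hGi ?_⟩
    all_goals filter_upwards [hG] with z hz
    · exact mul_nonneg (hθ01 z).1 hz
    · exact mul_le_of_le_one_left hz (hθ01 z).2
  · rw [pairing, dif_pos hφ, hℓ]
    refine integral_congr_ae ?_
    filter_upwards [hφ.coeFn_toLp] with z hz
    rw [hz]

end SubDensities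

section Duality

variable {X Y : Type*} [MeasureSpace X] [MeasureSpace Y]

/-- `h ∈ Γ^{h̄}(f, g)`. -/
structure IsCapacityPlan (hbar : X × Y → ℝ) (f : X → ℝ) (g : Y → ℝ) (h : X × Y → ℝ) : Prop where
  measurable : Measurable h
  bounds : ∀ᵐ p, 0 ≤ h p ∧ h p ≤ hbar p
  integral_fst : ∀ᵐ x, ∫ y, h (x, y) = f x
  integral_snd : ∀ᵐ y, ∫ x, h (x, y) = g y

structure IsDualFeasible (hbar c : X × Y → ℝ) (f : X → ℝ) (g : Y → ℝ) (u : X → ℝ) (v : Y → ℝ)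
    (w : X × Y → ℝ) : Prop where
  measurable_u : Measurable u
  measurable_v : Measurable v
  measurable_w : Measurable w
  integrable_u : Integrable fun x => u x * f x
  integrable_v : Integrable fun y => v y * g y
  integrable_w : Integrable fun p => w p * hbar p
  nonneg : ∀ᵐ p, 0 ≤ u p.1 + v p.2 - w p + c p
  nonpos : ∀ᵐ p, w p ≤ 0

noncomputable def dualValue (hbar : X × Y → ℝ) (f : X → ℝ) (g : Y → ℝ) (u : X → ℝ) (v : Y → ℝ)
    (w : X × Y → ℝ) : ℝ :=
  -(∫ x, u x * f x) - (∫ y, v y * g y) + ∫ p, w p * hbar p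

variable [SigmaFinite (volume : Measure X)] [SigmaFinite (volume : Measure Y)]

theorem dualValue_le_integral {hbar c h w : X × Y → ℝ} {f u : X → ℝ} {g v : Y → ℝ}
    (hbar_int : Integrable hbar) (hplan : IsCapacityPlan hbar f g h)
    (hdual : IsDualFeasible hbar c f g u v w) (hch : Integrable fun p => c p * h p) :
    dualValue hbar f g u v w ≤ ∫ p, c p * h p := by
  have hh := integrable_of_ae_bounds hbar_int hplan.measurable.aestronglyMeasurable hplan.bounds
  have hh0 : 0 ≤ᵐ[volume] h := hplan.bounds.mono fun _ hp => hp.1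
  have hu : Integrable fun p : X × Y => u p.1 * h p :=
    integrable_fst_mul_of_integral_eq hdual.measurable_u.aestronglyMeasurable hh hh0
      hplan.integral_fst hdual.integrable_u
  have hv : Integrable fun p : X × Y => v p.2 * h p :=
    integrable_snd_mul_of_integral_eq hdual.measurable_v.aestronglyMeasurable hh hh0
      hplan.integral_snd hdual.integrable_v
  have hw : Integrable fun p => w p * h p :=
    integrable_mul_of_ae_bounds hdual.measurable_w.aestronglyMeasurable hdual.integrable_w
      hplan.measurable.aestronglyMeasurable hplan.bounds
  have hu_eq : ∫ p, u p.1 * h p = ∫ x, u x * f x := by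
    rw [Measure.volume_eq_prod, integral_fst_mul_eq hu]
    refine integral_congr_ae ?_
    filter_upwards [hplan.integral_fst] with x hx
    rw [hx]
  have hv_eq : ∫ p, v p.2 * h p = ∫ y, v y * g y := by
    rw [Measure.volume_eq_prod, integral_snd_mul_eq hv]
    refine integral_congr_ae ?_
    filter_upwards [hplan.integral_snd] with y hy
    rw [hy]
  have hw_le : ∫ p, w p * hbar p ≤ ∫ p, w p * h p :=
    integral_mono_ae hdual.integrable_w hw <| (hplan.bounds.and hdual.nonpos).mono
      fun _ hp => mul_le_mul_of_nonpos_left hp.1.2 hp.2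
  have hsum : 0 ≤ ∫ p, (u p.1 * h p + v p.2 * h p - w p * h p) + c p * h p :=
    integral_nonneg_of_ae <| (hdual.nonneg.and hh0).mono fun p hp =>
      (mul_nonneg hp.1 hp.2).trans_eq (by ring)
  have huv : Integrable fun p : X × Y => u p.1 * h p + v p.2 * h p := hu.add hv
  have huvw : Integrable fun p : X × Y => u p.1 * h p + v p.2 * h p - w p * h p := huv.sub hw
  rw [integral_add huvw hch, integral_sub huv hw, integral_add hu hv, hu_eq, hv_eq] at hsum
  unfold dualValue
  linarith

end Duality

section Lagrangian

variable {X Y : Type*} [MeasureSpace X] [MeasureSpace Y]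
  [SigmaFinite (volume : Measure X)] [SigmaFinite (volume : Measure Y)]

noncomputable def lagrangian (c h : X × Y → ℝ) (f : X → ℝ) (g : Y → ℝ)
    (uv : (X → ℝ) × (Y → ℝ)) : ℝ :=
  (∫ p, (c p + uv.1 p.1 + uv.2 p.2) * h p) - (∫ x, uv.1 x * f x) - ∫ y, uv.2 y * g y

theorem lagrangian_eq {c h : X × Y → ℝ} {f : X → ℝ} {g : Y → ℝ} {uv : (X → ℝ) × (Y → ℝ)}
    (hh : Integrable h) (hch : Integrable fun p => c p * h p) (hf : Integrable f)
    (hg : Integrable g) (huv : uv ∈ boundedMeasurable X ×ˢ boundedMeasurable Y) :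
    lagrangian c h f g uv = (∫ p, c p * h p) + (∫ x, uv.1 x * ((∫ y, h (x, y)) - f x))
      + ∫ y, uv.2 y * ((∫ x, h (x, y)) - g y) := by
  obtain ⟨hu, hv⟩ := huv
  have huh : Integrable fun p : X × Y => uv.1 p.1 * h p :=
    integrable_mul_of_mem_boundedMeasurable
      ⟨hu.1.comp measurable_fst, hu.2.choose, fun p => hu.2.choose_spec p.1⟩ hh
  have hvh : Integrable fun p : X × Y => uv.2 p.2 * h p :=
    integrable_mul_of_mem_boundedMeasurable
      ⟨hv.1.comp measurable_snd, hv.2.choose, fun p => hv.2.choose_spec p.2⟩ hh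
  have hcuh : Integrable fun p => c p * h p + uv.1 p.1 * h p := hch.add huh
  rw [Measure.volume_eq_prod] at hh
  simp only [lagrangian, add_mul, mul_sub]
  rw [integral_add hcuh hvh, integral_add hch huh, Measure.volume_eq_prod,
    integral_fst_mul_eq huh, integral_snd_mul_eq hvh,
    integral_sub (integrable_mul_of_mem_boundedMeasurable hu hh.integral_prod_left)
      (integrable_mul_of_mem_boundedMeasurable hu hf),
    integral_sub (integrable_mul_of_mem_boundedMeasurable hv hh.integral_prod_right)
      (integrable_mul_of_mem_boundedMeasurable hv hg)]
  ring

theorem concaveOn_lagrangian {c h : X × Y → ℝ} {f : X → ℝ} {g : Y → ℝ} (hh : Integrable h)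
    (hch : Integrable fun p => c p * h p) (hf : Integrable f) (hg : Integrable g) :
    ConcaveOn ℝ (boundedMeasurable X ×ˢ boundedMeasurable Y) (lagrangian c h f g) := by
  have hconv := (convex_boundedMeasurable (α := X)).prod (convex_boundedMeasurable (α := Y))
  refine ⟨hconv, fun uv₁ h₁ uv₂ h₂ a b ha hb hab => le_of_eq ?_⟩
  have hhp : Integrable h (volume.prod volume) := Measure.volume_eq_prod X Y ▸ hh
  have hdX : Integrable fun x => (∫ y, h (x, y)) - f x := hhp.integral_prod_left.sub hf
  have hdY : Integrable fun y => (∫ x, h (x, y)) - g y := hhp.integral_prod_right.sub hg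
  rw [lagrangian_eq hh hch hf hg h₁, lagrangian_eq hh hch hf hg h₂,
    lagrangian_eq hh hch hf hg (hconv h₁ h₂ ha hb hab), Prod.fst_add, Prod.snd_add,
    Prod.smul_fst, Prod.smul_fst, Prod.smul_snd, Prod.smul_snd,
    integral_smul_add_smul_mul (integrable_mul_of_mem_boundedMeasurable h₁.1 hdX)
      (integrable_mul_of_mem_boundedMeasurable h₂.1 hdX),
    integral_smul_add_smul_mul (integrable_mul_of_mem_boundedMeasurable h₁.2 hdY)
      (integrable_mul_of_mem_boundedMeasurable h₂.2 hdY)]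
  simp only [smul_eq_mul]
  linear_combination (∫ p, c p * h p) * hab

theorem exists_lt_lagrangian {hbar c h : X × Y → ℝ} {f : X → ℝ} {g : Y → ℝ} {γ : ℝ}
    (hbar_int : Integrable hbar) (hc : c ∈ boundedMeasurable (X × Y)) (hf : Integrable f)
    (hg : Integrable g) (hh : Measurable h) (hh_bds : ∀ᵐ p, 0 ≤ h p ∧ h p ≤ hbar p)
    (hγ : IsCapacityPlan hbar f g h → γ < ∫ p, c p * h p) :
    ∃ uv ∈ boundedMeasurable X ×ˢ boundedMeasurable Y, γ < lagrangian c h f g uv := by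
  have hhi : Integrable h := integrable_of_ae_bounds hbar_int hh.aestronglyMeasurable hh_bds
  have hch : Integrable fun p => c p * h p := integrable_mul_of_mem_boundedMeasurable hc hhi
  have hL := fun uv (huv : uv ∈ boundedMeasurable X ×ˢ boundedMeasurable Y) =>
    lagrangian_eq hhi hch hf hg huv
  rw [Measure.volume_eq_prod] at hhi
  by_cases hX : (fun x => (∫ y, h (x, y)) - f x) =ᵐ[volume] 0
  · by_cases hY : (fun y => (∫ x, h (x, y)) - g y) =ᵐ[volume] 0
    · have hplan : IsCapacityPlan hbar f g h :=
        ⟨hh, hh_bds, hX.mono fun _ hx => sub_eq_zero.1 hx, hY.mono fun _ hy => sub_eq_zero.1 hy⟩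
      refine ⟨0, ⟨zero_mem_boundedMeasurable, zero_mem_boundedMeasurable⟩, ?_⟩
      simpa [hL 0 ⟨zero_mem_boundedMeasurable, zero_mem_boundedMeasurable⟩] using hγ hplan
    · obtain ⟨v, hv, hlt⟩ := exists_mem_boundedMeasurable_lt_integral_mul
        (d := fun y => (∫ x, h (x, y)) - g y) (hhi.integral_prod_right.sub hg) hY
        (γ - ∫ p, c p * h p)
      refine ⟨(0, v), ⟨zero_mem_boundedMeasurable, hv⟩, ?_⟩
      rw [hL _ ⟨zero_mem_boundedMeasurable, hv⟩]
      simp only [Pi.zero_apply, zero_mul, integral_zero]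
      linarith
  · obtain ⟨u, hu, hlt⟩ := exists_mem_boundedMeasurable_lt_integral_mul
      (d := fun x => (∫ y, h (x, y)) - f x) (hhi.integral_prod_left.sub hf) hX (γ - ∫ p, c p * h p)
    refine ⟨(u, 0), ⟨hu, zero_mem_boundedMeasurable⟩, ?_⟩
    rw [hL _ ⟨hu, zero_mem_boundedMeasurable⟩]
    simp only [Pi.zero_apply, zero_mul, integral_zero]
    linarith

end Lagrangian

section BoundedCost

variable {X Y : Type*} [MeasureSpace X] [MeasureSpace Y]

noncomputable def capacityMeasure (hbar : X × Y → ℝ) : Measure (X × Y) :=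
  volume.withDensity fun p => ENNReal.ofReal (hbar p)

theorem integral_capacityMeasure {hbar : X × Y → ℝ} (hbar_meas : Measurable hbar)
    (hbar_nonneg : ∀ p, 0 ≤ hbar p) (φ : X × Y → ℝ) :
    ∫ p, φ p ∂capacityMeasure hbar = ∫ p, hbar p * φ p := by
  rw [capacityMeasure, integral_withDensity_eq_integral_toReal_smul hbar_meas.ennreal_ofReal
    (ae_of_all _ fun _ => ENNReal.ofReal_lt_top)]
  simp [ENNReal.toReal_ofReal (hbar_nonneg _)]

theorem isFiniteMeasure_capacityMeasure {hbar : X × Y → ℝ} (hbar_int : Integrable hbar) :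
    IsFiniteMeasure (capacityMeasure hbar) :=
  isFiniteMeasure_withDensity_ofReal hbar_int.2

theorem add_add_mem_boundedMeasurable {c : X × Y → ℝ} {uv : (X → ℝ) × (Y → ℝ)}
    (hc : c ∈ boundedMeasurable (X × Y)) (huv : uv ∈ boundedMeasurable X ×ˢ boundedMeasurable Y) :
    (fun p => c p + uv.1 p.1 + uv.2 p.2) ∈ boundedMeasurable (X × Y) := by
  obtain ⟨⟨hc, C, hC⟩, ⟨hu, Cu, hCu⟩, ⟨hv, Cv, hCv⟩⟩ := And.intro hc huv
  refine ⟨(hc.add (hu.comp measurable_fst)).add (hv.comp measurable_snd), C + Cu + Cv,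
    fun p => (norm_add₃_le ..).trans ?_⟩
  gcongr
  exacts [hC p, hCu p.1, hCv p.2]

/-- The Lagrangian with the plan `h` replaced by a functional `ℓ` on `L²(h̄ dx dy)`. -/
noncomputable def weakLagrangian (hbar c : X × Y → ℝ) (f : X → ℝ) (g : Y → ℝ)
    (ℓ : WeakDual ℝ (Lp ℝ 2 (capacityMeasure hbar))) (uv : (X → ℝ) × (Y → ℝ)) : ℝ :=
  pairing _ ℓ (fun p => c p + uv.1 p.1 + uv.2 p.2) - (∫ x, uv.1 x * f x) - ∫ y, uv.2 y * g y

theorem continuous_weakLagrangian (hbar c : X × Y → ℝ) (f : X → ℝ) (g : Y → ℝ)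
    (uv : (X → ℝ) × (Y → ℝ)) : Continuous fun ℓ => weakLagrangian hbar c f g ℓ uv :=
  ((continuous_pairing _ _).sub continuous_const).sub continuous_const

theorem weakLagrangian_smul_add_smul (hbar c : X × Y → ℝ) (f : X → ℝ) (g : Y → ℝ)
    (ℓ₁ ℓ₂ : WeakDual ℝ (Lp ℝ 2 (capacityMeasure hbar))) (uv : (X → ℝ) × (Y → ℝ)) {a b : ℝ}
    (hab : a + b = 1) :
    weakLagrangian hbar c f g (a • ℓ₁ + b • ℓ₂) uv
      = a * weakLagrangian hbar c f g ℓ₁ uv + b * weakLagrangian hbar c f g ℓ₂ uv := by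
  simp only [weakLagrangian, pairing_smul_add_smul]
  linear_combination ((∫ x, uv.1 x * f x) + ∫ y, uv.2 y * g y) * hab

theorem weakLagrangian_eq_lagrangian {hbar c θ : X × Y → ℝ} {f : X → ℝ} {g : Y → ℝ}
    {ℓ : WeakDual ℝ (Lp ℝ 2 (capacityMeasure hbar))} {uv : (X → ℝ) × (Y → ℝ)}
    [IsFiniteMeasure (capacityMeasure hbar)] (hbar_meas : Measurable hbar)
    (hbar_nonneg : ∀ p, 0 ≤ hbar p) (hθ : ∀ φ, MemLp φ 2 (capacityMeasure hbar) →
      pairing _ ℓ φ = ∫ p, θ p * φ p ∂capacityMeasure hbar)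
    (hc : c ∈ boundedMeasurable (X × Y)) (huv : uv ∈ boundedMeasurable X ×ˢ boundedMeasurable Y) :
    weakLagrangian hbar c f g ℓ uv = lagrangian c (fun p => θ p * hbar p) f g uv := by
  obtain ⟨hφ, C, hC⟩ := add_add_mem_boundedMeasurable hc huv
  rw [weakLagrangian, lagrangian, hθ _ (MemLp.of_bound hφ.aestronglyMeasurable C (ae_of_all _ hC)),
    integral_capacityMeasure hbar_meas hbar_nonneg]
  simp only [mul_left_comm (hbar _), mul_comm (θ _)]

theorem exists_density_weakLagrangian_eq {hbar c : X × Y → ℝ} {f : X → ℝ} {g : Y → ℝ}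
    [IsFiniteMeasure (capacityMeasure hbar)] (hbar_meas : Measurable hbar)
    (hbar_nonneg : ∀ p, 0 ≤ hbar p) (hc : c ∈ boundedMeasurable (X × Y))
    {ℓ : WeakDual ℝ (Lp ℝ 2 (capacityMeasure hbar))} (hℓ : ℓ ∈ subDensities _) :
    ∃ θ : X × Y → ℝ, Measurable θ ∧ (∀ p, θ p ∈ Set.Icc 0 1) ∧
      ∀ uv ∈ boundedMeasurable X ×ˢ boundedMeasurable Y,
        weakLagrangian hbar c f g ℓ uv = lagrangian c (fun p => θ p * hbar p) f g uv := by
  obtain ⟨θ, hθ, hθ01, hθℓ⟩ := exists_density_of_mem_subDensities _ hℓ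
  exact ⟨θ, hθ, hθ01, fun uv huv => weakLagrangian_eq_lagrangian hbar_meas hbar_nonneg hθℓ hc huv⟩

theorem lagrangian_indicator_eq_dualValue (hbar c : X × Y → ℝ) (f : X → ℝ) (g : Y → ℝ)
    (uv : (X → ℝ) × (Y → ℝ)) :
    lagrangian c (fun p => {p | c p + uv.1 p.1 + uv.2 p.2 < 0}.indicator 1 p * hbar p) f g uv
      = dualValue hbar f g uv.1 uv.2 (fun p => min (c p + uv.1 p.1 + uv.2 p.2) 0) := by
  have hw : ∫ p, (c p + uv.1 p.1 + uv.2 p.2) *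
        ({p | c p + uv.1 p.1 + uv.2 p.2 < 0}.indicator 1 p * hbar p)
      = ∫ p, min (c p + uv.1 p.1 + uv.2 p.2) 0 * hbar p := by
    congr 1 with p
    by_cases hp : c p + uv.1 p.1 + uv.2 p.2 < 0
    · simp [hp, min_eq_left hp.le]
    · simp [hp, min_eq_right (not_lt.1 hp)]
  rw [lagrangian, dualValue, hw]
  ring

variable [SigmaFinite (volume : Measure X)] [SigmaFinite (volume : Measure Y)]

theorem exists_lt_dualValue_of_bounded {hbar c : X × Y → ℝ} {f : X → ℝ} {g : Y → ℝ} {γ : ℝ}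
    (hbar_meas : Measurable hbar) (hbar_nonneg : ∀ p, 0 ≤ hbar p) (hbar_int : Integrable hbar)
    (hc : c ∈ boundedMeasurable (X × Y)) (hf : Integrable f) (hg : Integrable g)
    (hγ : ∀ h, IsCapacityPlan hbar f g h → γ < ∫ p, c p * h p) :
    ∃ uv ∈ boundedMeasurable X ×ˢ boundedMeasurable Y,
      γ < dualValue hbar f g uv.1 uv.2 (fun p => min (c p + uv.1 p.1 + uv.2 p.2) 0) := by
  have := isFiniteMeasure_capacityMeasure hbar_int
  have hdens {θ : X × Y → ℝ} (hθ01 : ∀ p, θ p ∈ Set.Icc 0 1) :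
      ∀ᵐ p, 0 ≤ θ p * hbar p ∧ θ p * hbar p ≤ hbar p := ae_of_all _ fun p =>
    ⟨mul_nonneg (hθ01 p).1 (hbar_nonneg p), mul_le_of_le_one_left (hbar_nonneg p) (hθ01 p).2⟩
  obtain ⟨uv, huv, hlt⟩ := exists_mem_forall_lt_of_forall_exists_lt
    (F := weakLagrangian hbar c f g) (isCompact_subDensities _) (convex_subDensities _)
    ((exists_mem_subDensities_pairing_eq _ measurable_const fun _ => ⟨le_rfl, zero_le_one⟩).imp
      fun _ h => h.1)
    (fun uv _ => continuous_weakLagrangian hbar c f g uv)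
    (fun uv _ ℓ₁ _ ℓ₂ _ _ _ _ _ hab => weakLagrangian_smul_add_smul hbar c f g ℓ₁ ℓ₂ uv hab)
    (fun ℓ hℓ => by
      obtain ⟨θ, hθ, hθ01, hθℓ⟩ := exists_density_weakLagrangian_eq hbar_meas hbar_nonneg hc hℓ
      have hh := integrable_of_ae_bounds hbar_int (hθ.mul hbar_meas).aestronglyMeasurable
        (hdens hθ01)
      exact (concaveOn_lagrangian hh (integrable_mul_of_mem_boundedMeasurable hc hh) hf hg).congr
        fun uv huv => (hθℓ uv huv).symm)
    (fun ℓ hℓ => by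
      obtain ⟨θ, hθ, hθ01, hθℓ⟩ := exists_density_weakLagrangian_eq hbar_meas hbar_nonneg hc hℓ
      obtain ⟨uv, huv, hlt⟩ := exists_lt_lagrangian hbar_int hc hf hg (hθ.mul hbar_meas)
        (hdens hθ01) (hγ _)
      exact ⟨uv, huv, (hθℓ uv huv).symm ▸ hlt⟩)
  -- the infimum over sub-densities is attained at the density of `{c + u + v < 0}`
  have hs := (add_add_mem_boundedMeasurable hc huv).1
  obtain ⟨ℓ, hℓ, hℓθ⟩ := exists_mem_subDensities_pairing_eq (capacityMeasure hbar)
    (θ := {p | c p + uv.1 p.1 + uv.2 p.2 < 0}.indicator 1)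
    (measurable_one.indicator (measurableSet_lt hs measurable_const))
    fun p => by by_cases hp : c p + uv.1 p.1 + uv.2 p.2 < 0 <;> simp [hp]
  refine ⟨uv, huv, ?_⟩
  rw [← lagrangian_indicator_eq_dualValue,
    ← weakLagrangian_eq_lagrangian hbar_meas hbar_nonneg hℓθ hc huv]
  exact hlt ℓ hℓ

end BoundedCost

section GeneralCost

variable {X Y : Type*} [MeasureSpace X] [MeasureSpace Y]

theorem isDualFeasible_min_add_add {hbar c cm : X × Y → ℝ} {f : X → ℝ} {g : Y → ℝ}
    {uv : (X → ℝ) × (Y → ℝ)} (hbar_meas : Measurable hbar) (hbar_int : Integrable hbar)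
    (hcm : Measurable cm) (hccm : c =ᵐ[volume] cm) (hcbar : Integrable fun p => c p * hbar p)
    (hf : Integrable f) (hg : Integrable g)
    (huv : uv ∈ boundedMeasurable X ×ˢ boundedMeasurable Y) :
    IsDualFeasible hbar c f g uv.1 uv.2 (fun p => min (cm p + uv.1 p.1 + uv.2 p.2) 0) := by
  obtain ⟨⟨hu, Cu, hCu⟩, ⟨hv, Cv, hCv⟩⟩ := huv
  have hw : Measurable fun p => min (cm p + uv.1 p.1 + uv.2 p.2) 0 :=
    ((hcm.add (hu.comp measurable_fst)).add (hv.comp measurable_snd)).min measurable_const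
  have hcmbar : Integrable fun p => cm p * hbar p :=
    hcbar.congr (hccm.mono fun p hp => by simp only [hp])
  refine ⟨hu, hv, hw, integrable_mul_of_mem_boundedMeasurable ⟨hu, Cu, hCu⟩ hf,
    integrable_mul_of_mem_boundedMeasurable ⟨hv, Cv, hCv⟩ hg, ?_, ?_,
    ae_of_all _ fun _ => min_le_right _ _⟩
  · refine (hcmbar.norm.add (hbar_int.norm.const_mul (Cu + Cv))).mono'
      (hw.mul hbar_meas).aestronglyMeasurable (ae_of_all _ fun p => ?_)
    have hmin : ‖min (cm p + uv.1 p.1 + uv.2 p.2) 0‖ ≤ ‖cm p‖ + (Cu + Cv) :=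
      calc ‖min (cm p + uv.1 p.1 + uv.2 p.2) 0‖ ≤ ‖cm p + uv.1 p.1 + uv.2 p.2‖ := by
            simp only [Real.norm_eq_abs]; grind
        _ ≤ ‖cm p‖ + ‖uv.1 p.1‖ + ‖uv.2 p.2‖ := norm_add₃_le
        _ ≤ ‖cm p‖ + (Cu + Cv) := by linarith [hCu p.1, hCv p.2]
    simp only [Pi.add_apply, norm_mul]
    nlinarith [mul_le_mul_of_nonneg_right hmin (norm_nonneg (hbar p))]
  · filter_upwards [hccm] with p hp
    linarith [min_le_left (cm p + uv.1 p.1 + uv.2 p.2) 0]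

theorem dualValue_sub_dualValue_le {hbar c c' cm : X × Y → ℝ} {f : X → ℝ} {g : Y → ℝ}
    {uv : (X → ℝ) × (Y → ℝ)} (hbar_nonneg : ∀ p, 0 ≤ hbar p) (hbar_int : Integrable hbar)
    (hc' : c' ∈ boundedMeasurable (X × Y)) (hccm : c =ᵐ[volume] cm)
    (huv : uv ∈ boundedMeasurable X ×ˢ boundedMeasurable Y)
    (hw : Integrable fun p => min (cm p + uv.1 p.1 + uv.2 p.2) 0 * hbar p)
    (hE : Integrable fun p => |c p - c' p| * hbar p) :
    dualValue hbar f g uv.1 uv.2 (fun p => min (c' p + uv.1 p.1 + uv.2 p.2) 0)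
      - dualValue hbar f g uv.1 uv.2 (fun p => min (cm p + uv.1 p.1 + uv.2 p.2) 0)
      ≤ ∫ p, |c p - c' p| * hbar p := by
  obtain ⟨hs, C, hC⟩ := add_add_mem_boundedMeasurable hc' huv
  have hw' : Integrable fun p => min (c' p + uv.1 p.1 + uv.2 p.2) 0 * hbar p :=
    integrable_mul_of_mem_boundedMeasurable ⟨hs.min measurable_const, C, fun p =>
      le_trans (by simp only [Real.norm_eq_abs]; grind) (hC p)⟩ hbar_int
  have hle : ∫ p, (min (c' p + uv.1 p.1 + uv.2 p.2) 0 * hbar p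
      - min (cm p + uv.1 p.1 + uv.2 p.2) 0 * hbar p) ≤ ∫ p, |c p - c' p| * hbar p :=
    integral_mono_ae (hw'.sub hw) hE <| hccm.mono fun p hp => by
      dsimp only
      rw [← sub_mul, hp]
      exact mul_le_mul_of_nonneg_right (by grind) (hbar_nonneg p)
  rw [integral_sub hw' hw] at hle
  simp only [dualValue]
  linarith

variable [SigmaFinite (volume : Measure X)] [SigmaFinite (volume : Measure Y)]

theorem exists_isDualFeasible_lt_dualValue {hbar c : X × Y → ℝ} {f : X → ℝ} {g : Y → ℝ}
    {V γ : ℝ} (hbar_meas : Measurable hbar) (hbar_nonneg : ∀ p, 0 ≤ hbar p)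
    (hbar_int : Integrable hbar) (hc : AEStronglyMeasurable c)
    (hcbar : Integrable fun p => c p * hbar p) (hf : Integrable f) (hg : Integrable g)
    (hV : ∀ h, IsCapacityPlan hbar f g h → V ≤ ∫ p, c p * h p) (hγ : γ < V) :
    ∃ u v w, IsDualFeasible hbar c f g u v w ∧ γ < dualValue hbar f g u v w := by
  obtain ⟨c', hc', hE, hEδ⟩ := exists_mem_boundedMeasurable_integral_abs_sub_mul_le hc
    hbar_meas.aestronglyMeasurable hbar_nonneg hcbar (δ := (V - γ) / 3) (by linarith)
  obtain ⟨uv, huv, hlt⟩ := exists_lt_dualValue_of_bounded (γ := γ + (V - γ) / 3) hbar_meas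
    hbar_nonneg hbar_int hc' hf hg fun h hplan => by
      have hh := integrable_of_ae_bounds hbar_int hplan.measurable.aestronglyMeasurable
        hplan.bounds
      linarith [hV h hplan, integral_mul_sub_integral_mul_le
        (integrable_mul_of_ae_bounds hc hcbar hplan.measurable.aestronglyMeasurable hplan.bounds)
        (integrable_mul_of_mem_boundedMeasurable hc' hh) hE hplan.bounds]
  have hfeas := isDualFeasible_min_add_add hbar_meas hbar_int hc.stronglyMeasurable_mk.measurable
    hc.ae_eq_mk hcbar hf hg huv
  refine ⟨_, _, _, hfeas, ?_⟩
  linarith [dualValue_sub_dualValue_le (f := f) (g := g) hbar_nonneg hbar_int hc' hc.ae_eq_mk huv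
    hfeas.integrable_w hE]

end GeneralCost

end Levin

open Levin

theorem levin_duality (m n : ℕ)
    (hbar c : (Fin m → ℝ) × (Fin n → ℝ) → ℝ)
    (f : (Fin m → ℝ) → ℝ) (g : (Fin n → ℝ) → ℝ)
    (hbar_meas : Measurable hbar) (hbar_nonneg : ∀ p, 0 ≤ hbar p)
    (hbar_bdd : ∃ C, ∀ p, hbar p ≤ C) (hbar_supp : HasCompactSupport hbar)
    (f_int : Integrable f)
    (g_int : Integrable g)
    (c_locint : LocallyIntegrable c)
    (h₀ : (Fin m → ℝ) × (Fin n → ℝ) → ℝ) (h₀_meas : Measurable h₀)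
    (h₀_bds : ∀ᵐ p, 0 ≤ h₀ p ∧ h₀ p ≤ hbar p)
    (h₀_margx : ∀ᵐ x, (∫ y, h₀ (x, y)) = f x)
    (h₀_margy : ∀ᵐ y, (∫ x, h₀ (x, y)) = g y)
    (h₀_min : ∀ h : (Fin m → ℝ) × (Fin n → ℝ) → ℝ, Measurable h →
      (∀ᵐ p, 0 ≤ h p ∧ h p ≤ hbar p) →
      (∀ᵐ x, (∫ y, h (x, y)) = f x) → (∀ᵐ y, (∫ x, h (x, y)) = g y) →
      (∫ p, c p * h₀ p) ≤ ∫ p, c p * h p) :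
    (∫ p, c p * h₀ p) =
      sSup {r : ℝ | ∃ (u : (Fin m → ℝ) → ℝ) (v : (Fin n → ℝ) → ℝ)
          (w : (Fin m → ℝ) × (Fin n → ℝ) → ℝ),
        Measurable u ∧ Measurable v ∧ Measurable w ∧
        Integrable (fun x => u x * f x) ∧ Integrable (fun y => v y * g y) ∧
        Integrable (fun p => w p * hbar p) ∧
        (∀ᵐ p : (Fin m → ℝ) × (Fin n → ℝ), 0 ≤ u p.1 + v p.2 - w p + c p) ∧
        (∀ᵐ p : (Fin m → ℝ) × (Fin n → ℝ), w p ≤ 0) ∧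
        r = -(∫ x, u x * f x) - (∫ y, v y * g y) + (∫ p, w p * hbar p)} := by
  obtain ⟨C, hC⟩ := hbar_bdd
  have hbar_norm (p) : ‖hbar p‖ ≤ C := (Real.norm_of_nonneg (hbar_nonneg p)).trans_le (hC p)
  have hbar_int : Integrable hbar := by
    simpa using integrable_mul_of_hasCompactSupport (locallyIntegrable_const 1)
      hbar_meas.aestronglyMeasurable hbar_norm hbar_supp
  have hcbar : Integrable fun p => c p * hbar p := integrable_mul_of_hasCompactSupport c_locint
    hbar_meas.aestronglyMeasurable hbar_norm hbar_supp
  have h₀_plan : IsCapacityPlan hbar f g h₀ := ⟨h₀_meas, h₀_bds, h₀_margx, h₀_margy⟩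
  have hgap (γ) (hγ : γ < ∫ p, c p * h₀ p) :=
    exists_isDualFeasible_lt_dualValue hbar_meas hbar_nonneg hbar_int
      c_locint.aestronglyMeasurable hcbar f_int g_int (fun h hh => h₀_min h hh.1 hh.2 hh.3 hh.4) hγ
  refine (csSup_eq_of_forall_le_of_forall_lt_exists_gt ?_ ?_ fun γ hγ => ?_).symm
  · obtain ⟨u, v, w, hD, -⟩ := hgap _ (sub_one_lt _)
    exact ⟨_, u, v, w, hD.1, hD.2, hD.3, hD.4, hD.5, hD.6, hD.7, hD.8, rfl⟩
  · rintro _ ⟨u, v, w, hu, hv, hw, huf, hvg, hwh, hcon, hwn, rfl⟩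
    exact dualValue_le_integral hbar_int h₀_plan ⟨hu, hv, hw, huf, hvg, hwh, hcon, hwn⟩
      (integrable_mul_of_ae_bounds c_locint.aestronglyMeasurable hcbar h₀_meas.aestronglyMeasurable
        h₀_bds)
  · obtain ⟨u, v, w, hD, hlt⟩ := hgap γ hγ
    exact ⟨_, ⟨u, v, w, hD.1, hD.2, hD.3, hD.4, hD.5, hD.6, hD.7, hD.8, rfl⟩, hlt⟩
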